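/- Let G = ℤ/Nℤ, let χ: G → ℝ_{≥0} with ‖χ‖₁ > 0, and let Ω ⊆ G, η ∈ (0, 1/20). Suppose that |1 − e(ξn/N)| ≤ 20η for all n ∈ Bohr(Ω, 2η) and ξ ∈ Ω, and that |χ(n)| ≤ η‖χ‖₁ for all n ∉ Bohr(Ω, 2η). Then for every ξ ∈ Ω, |1 − χ̂(ξ)/‖χ‖₁| ≤ 30η. -/

import Mathlib

open Finset

/-- `e x = exp(2πix)`. -/
noncomputable def e (x : ℝ) : ℂ := Complex.exp (2 * Real.pi * Complex.I * (x : ℂ))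

/-- Distance to the nearest integer. -/
noncomputable def nint (x : ℝ) : ℝ := |x - round x|

/-- The (normalized) Fourier transform on `ℤ/Nℤ`. -/
noncomputable def dft (N : ℕ) [NeZero N] (f : ZMod N → ℂ) (ξ : ZMod N) : ℂ :=
  (1/(N : ℂ)) * ∑ n : ZMod N, f n * e (-((ξ.val * n.val : ℕ) : ℝ) / N)

/-- The `L¹`-norm `(1/N) ∑_n |χ(n)|` on `ℤ/Nℤ`. -/
noncomputable def l1norm (N : ℕ) [NeZero N] (χ : ZMod N → ℝ) : ℝ :=
  (1/(N : ℝ)) * ∑ n : ZMod N, |χ n|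

lemma e_norm (x : ℝ) : ‖e x‖ = 1 := by
  simp [e, Complex.norm_exp]

lemma e_int_add (x : ℝ) (k : ℤ) : e (x + k) = e x := by
  unfold e
  push_cast
  rw [mul_add, Complex.exp_add]
  have : Complex.exp (2 * Real.pi * Complex.I * (k:ℂ)) = 1 := by
    rw [show (2 * (Real.pi:ℂ) * Complex.I * (k:ℂ)) = (k:ℤ) * (2 * Real.pi * Complex.I) by push_cast; ring]
    exact Complex.exp_int_mul_two_pi_mul_I k
  rw [this, mul_one]

lemma e_neg (x : ℝ) : e (-x) = starRingEnd ℂ (e x) := by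
  unfold e
  rw [← Complex.exp_conj]
  have h : (starRingEnd ℂ) (2 * (Real.pi:ℂ) * Complex.I * (x:ℂ)) = 2 * (Real.pi:ℂ) * Complex.I * ((-x : ℝ):ℂ) := by
    have h2 : (starRingEnd ℂ) 2 = 2 := by
      rw [Complex.conj_eq_iff_re]; norm_num
    simp only [map_mul, Complex.conj_I, Complex.conj_ofReal, h2]
    push_cast
    ring
  rw [h]

lemma norm_one_sub_e_le_two (x : ℝ) : ‖(1:ℂ) - e x‖ ≤ 2 := by
  calc ‖(1:ℂ) - e x‖ ≤ ‖(1:ℂ)‖ + ‖e x‖ := norm_sub_le _ _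
  _ = 2 := by rw [e_norm]; norm_num

lemma norm_one_sub_e_neg (x : ℝ) : ‖(1:ℂ) - e (-x)‖ = ‖(1:ℂ) - e x‖ := by
  rw [e_neg, show (1:ℂ) - starRingEnd ℂ (e x) = starRingEnd ℂ (1 - e x) by simp [map_sub]]
  exact RCLike.norm_conj _

lemma e_mod (m N : ℕ) (hN : (N:ℝ) ≠ 0) : e ((m:ℝ)/N) = e (((m % N : ℕ):ℝ)/N) := by
  have hm : (m:ℝ) = (N:ℝ) * ((m / N : ℕ):ℝ) + ((m % N : ℕ):ℝ) := by
    rw [← Nat.cast_mul, ← Nat.cast_add, Nat.div_add_mod]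
  have : (m:ℝ)/N = ((m % N : ℕ):ℝ)/N + ((m / N : ℕ) : ℤ) := by
    rw [hm, Int.cast_natCast]; field_simp; ring
  rw [this, e_int_add]

/-- Frequencies in `Ω` see the cutoff `χ` as nearly constant: under the stated
concentration properties of `χ` on the Bohr set `Bohr(Ω, 2η)`,
`|1 - χ̂(ξ)/‖χ‖₁| ≤ 30η` for every `ξ ∈ Ω`. -/
theorem stmt_10 (N : ℕ) [NeZero N] (χ : ZMod N → ℝ) (hχ : ∀ n, 0 ≤ χ n)
    (Ω : Finset (ZMod N)) (η : ℝ) (hη : 0 < η) (hη' : η < 1/20)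
    (hL1 : 0 < l1norm N χ)
    (h1 : ∀ n : ZMod N, (∀ ξ ∈ Ω, nint (((ξ * n).val : ℝ) / N) ≤ 2*η) →
      ∀ ξ ∈ Ω, ‖(1 : ℂ) - e (((ξ * n).val : ℝ) / N)‖ ≤ 20*η)
    (h2 : ∀ n : ZMod N, ¬ (∀ ξ ∈ Ω, nint (((ξ * n).val : ℝ) / N) ≤ 2*η) →
      |χ n| ≤ η * l1norm N χ) :
    ∀ ξ ∈ Ω, ‖(1 : ℂ) - dft N (fun n => (χ n : ℂ)) ξ / ((l1norm N χ : ℝ) : ℂ)‖ ≤ 30*η := by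
  intro ξ hξ
  set L := l1norm N χ with hLdef
  have hN0 : (N:ℝ) ≠ 0 := Nat.cast_ne_zero.mpr (NeZero.ne N)
  have hNpos : (0:ℝ) < N := by
    have := Nat.pos_of_ne_zero (NeZero.ne N); exact_mod_cast this
  have hSum : ∑ n : ZMod N, χ n = (N:ℝ) * L := by
    have habs : ∑ n : ZMod N, |χ n| = ∑ n : ZMod N, χ n :=
      Finset.sum_congr rfl fun n _ => abs_of_nonneg (hχ n)
    rw [hLdef, l1norm, habs]
    field_simp
  have hSc : ∑ n : ZMod N, (χ n : ℂ) = (((N:ℝ) * L : ℝ) : ℂ) := by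
    push_cast [← hSum]
    rfl
  have hL0 : ((L:ℝ):ℂ) ≠ 0 := by exact_mod_cast ne_of_gt hL1
  have hN0c : (N:ℂ) ≠ 0 := Nat.cast_ne_zero.mpr (NeZero.ne N)
  have key : (1:ℂ) - dft N (fun n => (χ n:ℂ)) ξ / ((L:ℝ):ℂ)
      = (((N:ℝ)*L : ℝ):ℂ)⁻¹ *
        ∑ n : ZMod N, (χ n:ℂ) * (1 - e (-((ξ.val * n.val : ℕ) : ℝ) / N)) := by
    have expand : ∑ n : ZMod N, (χ n:ℂ) * (1 - e (-((ξ.val * n.val : ℕ) : ℝ) / N))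
        = (((N:ℝ) * L : ℝ) : ℂ) - ∑ n : ZMod N, (χ n:ℂ) * e (-((ξ.val * n.val : ℕ) : ℝ) / N) := by
      simp only [mul_sub, mul_one, Finset.sum_sub_distrib, hSc]
    rw [dft, expand]
    push_cast
    field_simp
  rw [key, norm_mul]
  have hNL : (0:ℝ) < (N:ℝ)*L := by positivity
  have hinv : ‖(((N:ℝ)*L:ℝ):ℂ)⁻¹‖ = ((N:ℝ)*L)⁻¹ := by
    rw [norm_inv, Complex.norm_real, Real.norm_eq_abs, abs_of_pos hNL]
  have hterm : ∀ n ∈ (univ : Finset (ZMod N)),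
      ‖(χ n:ℂ) * (1 - e (-((ξ.val * n.val : ℕ) : ℝ) / N))‖ ≤ 20*η*χ n + 2*η*L := by
    intro n _
    rw [norm_mul, Complex.norm_real, Real.norm_eq_abs, abs_of_nonneg (hχ n)]
    have heq : ‖(1:ℂ) - e (-((ξ.val * n.val : ℕ) : ℝ) / N)‖
        = ‖(1:ℂ) - e (((ξ * n).val : ℝ) / N)‖ := by
      rw [show (-((ξ.val * n.val : ℕ) : ℝ) / N) = -(((ξ.val * n.val : ℕ) : ℝ) / N) by ring,
        norm_one_sub_e_neg, e_mod _ _ hN0, ← ZMod.val_mul]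
    by_cases hb : ∀ ξ' ∈ Ω, nint (((ξ' * n).val : ℝ) / N) ≤ 2*η
    · have h20 := h1 n hb ξ hξ
      rw [heq]
      have hn1 : ‖(1:ℂ) - e (((ξ * n).val : ℝ) / N)‖ ≤ 20*η := h20
      nlinarith [hχ n, norm_nonneg ((1:ℂ) - e (((ξ * n).val : ℝ) / N)), hL1, hη]
    · have hsm := h2 n hb
      rw [abs_of_nonneg (hχ n)] at hsm
      have h2b : ‖(1:ℂ) - e (-((ξ.val * n.val : ℕ) : ℝ) / N)‖ ≤ 2 := by
        rw [show (-((ξ.val * n.val : ℕ) : ℝ) / N) = -(((ξ.val * n.val : ℕ) : ℝ) / N) by ring]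
        exact norm_one_sub_e_le_two _
      nlinarith [hχ n, norm_nonneg ((1:ℂ) - e (-((ξ.val * n.val : ℕ) : ℝ) / N)), hη, hL1]
  have hcard : (Finset.univ : Finset (ZMod N)).card = N := by
    simp [Finset.card_univ, ZMod.card]
  have hbound : ‖∑ n : ZMod N, (χ n:ℂ) * (1 - e (-((ξ.val * n.val : ℕ) : ℝ) / N))‖
      ≤ 22*η*((N:ℝ)*L) := by
    refine (norm_sum_le _ _).trans ?_
    calc ∑ n : ZMod N, ‖(χ n:ℂ) * (1 - e (-((ξ.val * n.val : ℕ) : ℝ) / N))‖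
        ≤ ∑ n : ZMod N, (20*η*χ n + 2*η*L) := Finset.sum_le_sum hterm
      _ = 20*η*((N:ℝ)*L) + (N:ℝ)*(2*η*L) := by
          rw [Finset.sum_add_distrib, ← Finset.mul_sum, hSum, Finset.sum_const, hcard,
            nsmul_eq_mul]
      _ = 22*η*((N:ℝ)*L) := by ring
  calc ‖(((N:ℝ)*L:ℝ):ℂ)⁻¹‖ * ‖∑ n : ZMod N, (χ n:ℂ) * (1 - e (-((ξ.val * n.val : ℕ) : ℝ) / N))‖
      ≤ ((N:ℝ)*L)⁻¹ * (22*η*((N:ℝ)*L)) := by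
        rw [hinv]; exact mul_le_mul_of_nonneg_left hbound (inv_nonneg.mpr hNL.le)
    _ = 22*η := by field_simp
    _ ≤ 30*η := by nlinarith
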